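/- (1) The Lie algebra u_∞ is not solvable. (2) The centre of u_∞ is zero. (3) For an element u ∈ u_∞, the inner derivation ad(u) of u_∞ is a nilpotent endomorphism (i.e., (ad u)^m = 0 for some natural number m) if and only if u = 0; nevertheless, every inner derivation ad(u), u ∈ u_∞, is locally nilpotent (for every v ∈ u_∞ there exists m with (ad u)^m(v) = 0). -/

import Mathlib

/-!
Write `e p q = X p • ∂_q` for `p < q`. Since `⁅e p r, e r q⁆ = e p q`, the element `e p q` lies
in the `k`-th derived algebra as soon as `q - p ≥ 2 ^ k`, so no derived algebra vanishes.

Every `u ∈ u_∞` is a locally nilpotent derivation of `P_∞`: the elements killed by a power of `u`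
form a subalgebra, and it contains each `X i` by induction on `i`, because `u (X i)` only involves
earlier variables. Expanding `(ad u) ^ m v = ∑ (m choose i) • u ^ i * v * (-u) ^ j` in
`End P_∞` then shows that `ad u` is locally nilpotent on `u_∞`.

If `u ≠ 0`, local nilpotency provides `c` with `u c ≠ 0 = u (u c)`. For `N` beyond the variables
of `c` and the support of `u`, `(ad u) ^ m (c ^ m • ∂_N)` sends `X N` to
`u ^ m (c ^ m) = m! • (u c) ^ m`, which is nonzero in characteristic zero; so `ad u` is nilpotent
only for `u = 0`. A central `u` has `ad u = 0`, hence `u = 0`.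
-/

open MvPolynomial

noncomputable section


theorem Derivation.mem_supported_of_forall_mem'
    {K : Type*} [CommRing K] {σ : Type*} (s : Set σ)
    (D : Derivation K (MvPolynomial σ K) (MvPolynomial σ K))
    (h : ∀ j ∈ s, D (X j) ∈ supported K s)
    {p : MvPolynomial σ K} (hp : p ∈ supported K s) : D p ∈ supported K s := by
  rw [supported_eq_adjoin_X] at hp
  induction hp using Algebra.adjoin_induction with
  | mem x hx =>
    obtain ⟨j, hj, rfl⟩ := hx
    exact h j hj
  | algebraMap r =>
    rw [Derivation.map_algebraMap]
    exact zero_mem _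
  | add x y hx hy ihx ihy =>
    rw [map_add]
    exact add_mem ihx ihy
  | mul x y hx hy ihx ihy =>
    rw [Derivation.leibniz, smul_eq_mul, smul_eq_mul]
    rw [← supported_eq_adjoin_X] at hx hy
    exact add_mem (mul_mem hx ihy) (mul_mem hy ihx)

/-- The defining condition for the Lie algebra `u_∞ = ⊕_{i ≥ 1} P_{i-1}∂_i` of triangular
polynomial derivations of `P_∞ = K[x₁,x₂,…]` (variables indexed by `ℕ`, zero-based):
a derivation `D` belongs to `u_∞` iff each `D (X i)` only involves the variables `X j`
with `j < i`, and all but finitely many of the `D (X i)` vanish (so that `D` is a *finite*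
sum `Σ a_i ∂_i` with `a_i ∈ P_{i-1}`). -/
def triSetInf (K : Type*) [Field K] :
    Set (Derivation K (MvPolynomial ℕ K) (MvPolynomial ℕ K)) :=
  {D | (∀ i : ℕ, D (X i) ∈ supported K {j : ℕ | j < i}) ∧ {i : ℕ | D (X i) ≠ 0}.Finite}

theorem triSetInf_stable {K : Type*} [Field K]
    {D : Derivation K (MvPolynomial ℕ K) (MvPolynomial ℕ K)}
    (hD : D ∈ triSetInf K) (i : ℕ) :
    ∀ j ∈ {j' : ℕ | j' < i}, D (X j) ∈ supported K {j' : ℕ | j' < i} := by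
  intro j hj
  have hj' : j < i := hj
  refine supported_mono (t := {j' : ℕ | j' < i}) ?_ (hD.1 j)
  intro l hl
  have hl' : l < j := hl
  exact lt_trans hl' hj'

/-- The Lie algebra `u_∞ = ⊕_{i ≥ 1} P_{i-1}∂_i` of triangular polynomial derivations of
the polynomial algebra `P_∞ = K[x₁,x₂,…]` in countably many variables, as a Lie
subalgebra of the Lie algebra of all `K`-derivations of `P_∞`. -/
def triangularInf (K : Type*) [Field K] :
    LieSubalgebra K (Derivation K (MvPolynomial ℕ K) (MvPolynomial ℕ K)) where
  carrier := triSetInf K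
  add_mem' := by
    intro a b ha hb
    constructor
    · intro i
      rw [Derivation.add_apply]
      exact add_mem (ha.1 i) (hb.1 i)
    · refine Set.Finite.subset (ha.2.union hb.2) ?_
      intro i hi
      by_contra hcon
      simp only [Set.mem_union, Set.mem_setOf_eq, not_or, not_not] at hcon
      exact hi (by rw [Derivation.add_apply, hcon.1, hcon.2, add_zero])
  zero_mem' := by
    constructor
    · intro i
      rw [Derivation.zero_apply]
      exact zero_mem _
    · refine Set.Finite.subset (Set.finite_empty) ?_
      intro i hi
      exact hi (Derivation.zero_apply _)
  smul_mem' := by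
    intro c a ha
    constructor
    · intro i
      rw [Derivation.smul_apply]
      exact Subalgebra.smul_mem _ (ha.1 i) c
    · refine Set.Finite.subset ha.2 ?_
      intro i hi
      by_contra hcon
      simp only [Set.mem_setOf_eq, not_not] at hcon
      exact hi (by rw [Derivation.smul_apply, hcon, smul_zero])
  lie_mem' := by
    intro a b ha hb
    constructor
    · intro i
      rw [Derivation.commutator_apply]
      exact sub_mem
        (Derivation.mem_supported_of_forall_mem' _ a (triSetInf_stable ha i) (hb.1 i))
        (Derivation.mem_supported_of_forall_mem' _ b (triSetInf_stable hb i) (ha.1 i))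
    · refine Set.Finite.subset (ha.2.union hb.2) ?_
      intro i hi
      by_contra hcon
      simp only [Set.mem_union, Set.mem_setOf_eq, not_or, not_not] at hcon
      refine hi ?_
      rw [Derivation.commutator_apply, hcon.1, hcon.2, map_zero, map_zero, sub_zero]

open Finset

namespace Derivation

variable {R A : Type*} [CommSemiring R] [CommSemiring A] [Algebra R A] (D : Derivation R A A)

theorem iterate_eq_zero_of_le {x : A} {a m : ℕ} (hx : D^[a] x = 0) (ham : a ≤ m) :
    D^[m] x = 0 := by
  obtain ⟨k, rfl⟩ := Nat.exists_eq_add_of_le ham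
  rw [add_comm, Function.iterate_add_apply, hx, iterate_map_zero]

theorem iterate_add_mul_eq_zero {a b : ℕ} {x y : A} (hx : D^[a] x = 0) (hy : D^[b] y = 0) :
    D^[a + b] (x * y) = 0 := by
  match a, b with
  | 0, _ => rw [Function.iterate_zero_apply] at hx; rw [hx, zero_mul, iterate_map_zero]
  | _, 0 => rw [Function.iterate_zero_apply] at hy; rw [hy, mul_zero, iterate_map_zero]
  | a + 1, b + 1 =>
    have hxDy := iterate_add_mul_eq_zero hx (Function.iterate_succ_apply D b y ▸ hy)
    have hyDx := iterate_add_mul_eq_zero hy (Function.iterate_succ_apply D a x ▸ hx)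
    rw [show a + 1 + (b + 1) = a + 1 + b + 1 by omega, Function.iterate_succ_apply, leibniz,
      iterate_map_add, smul_eq_mul, smul_eq_mul, hxDy, show a + 1 + b = b + 1 + a by omega, hyDx,
      add_zero]
termination_by a + b

def nilSubalgebra : Subalgebra R A where
  carrier := {x | ∃ n, D^[n] x = 0}
  mul_mem' := fun ⟨a, ha⟩ ⟨b, hb⟩ => ⟨a + b, D.iterate_add_mul_eq_zero ha hb⟩
  add_mem' := fun {x y} ⟨a, ha⟩ ⟨b, hb⟩ => ⟨a + b, by
    rw [iterate_map_add, D.iterate_eq_zero_of_le ha (by omega),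
      D.iterate_eq_zero_of_le hb (by omega), add_zero]⟩
  algebraMap_mem' r := ⟨1, by rw [Function.iterate_one, map_algebraMap]⟩

theorem iterate_pow_eq_descFactorial_smul {c : A} (hc : D (D c) = 0) {m j : ℕ} (hj : j ≤ m) :
    D^[j] (c ^ m) = m.descFactorial j • (c ^ (m - j) * D c ^ j) := by
  induction j with
  | zero => simp
  | succ j ih =>
    rw [Function.iterate_succ_apply', ih (by omega), map_nsmul, leibniz, leibniz_pow,
      leibniz_pow, hc, Nat.sub_sub, Nat.descFactorial_succ]
    simp only [smul_eq_mul, nsmul_eq_mul, Nat.cast_mul]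
    ring

theorem iterate_pow_self_eq_factorial_smul {c : A} (hc : D (D c) = 0) (m : ℕ) :
    D^[m] (c ^ m) = m.factorial • D c ^ m := by
  rw [D.iterate_pow_eq_descFactorial_smul hc le_rfl, Nat.sub_self, pow_zero, one_mul,
    Nat.descFactorial_self]

end Derivation

section AdjointAction

attribute [local instance] LieRing.ofAssociativeRing

namespace Module.End

variable {R M : Type*} [CommRing R] [AddCommGroup M] [Module R M]

theorem ad_pow_apply_eq_sum (f g : Module.End R M) (m : ℕ) (x : M) :
    ((LieAlgebra.ad R (Module.End R M) f ^ m) g) x =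
      ∑ ij ∈ antidiagonal m, m.choose ij.1 • (f ^ ij.1) (g (((-f) ^ ij.2) x)) := by
  have hneg : -LinearMap.mulRight R f = LinearMap.mulRight R (-f) := by ext; simp
  rw [LieAlgebra.ad_eq_lmul_left_sub_lmul_right, Pi.sub_apply, sub_eq_add_neg, hneg,
    (LinearMap.commute_mulLeft_right f (-f)).add_pow', LinearMap.sum_apply, LinearMap.sum_apply]
  refine sum_congr rfl fun ij _ => ?_
  simp [LinearMap.pow_mulLeft, LinearMap.pow_mulRight]

theorem exists_forall_ad_pow_apply_eq_zero {f : Module.End R M}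
    (hf : ∀ y, ∃ n, (f ^ n) y = 0) (g : Module.End R M) (x : M) :
    ∃ n, ∀ m ≥ n, ((LieAlgebra.ad R (Module.End R M) f ^ m) g) x = 0 := by
  obtain ⟨a, ha⟩ := hf x
  choose b hb using fun j => hf (g (((-f) ^ j) x))
  refine ⟨a + (range a).sup b, fun m hm => ?_⟩
  rw [ad_pow_apply_eq_sum]
  refine sum_eq_zero fun ⟨i, j⟩ hij => ?_
  rw [HasAntidiagonal.mem_antidiagonal] at hij
  rcases le_or_gt a j with haj | hja
  · rw [neg_pow, mul_apply, pow_map_zero_of_le haj ha, map_zero, map_zero, map_zero, smul_zero]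
  · have hbi : b j ≤ i := (le_sup (mem_range.2 hja)).trans (by omega)
    rw [pow_map_zero_of_le hbi (hb j), smul_zero]

end Module.End

namespace Derivation

variable {R A : Type*} [CommRing R] [CommRing A] [Algebra R A]

theorem coe_ad_pow (D₁ D₂ : Derivation R A A) (m : ℕ) :
    (((LieAlgebra.ad R _ D₁ ^ m) D₂ : Derivation R A A) : Module.End R A) =
      (LieAlgebra.ad R (Module.End R A) D₁ ^ m) D₂ := by
  induction m with
  | zero => rfl
  | succ m ih =>
    rw [pow_succ', Module.End.mul_apply, LieAlgebra.ad_apply, commutator_coe_linear_map, ih,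
      pow_succ', Module.End.mul_apply, LieAlgebra.ad_apply]

theorem exists_forall_ad_pow_apply_eq_zero {D₁ : Derivation R A A}
    (hD₁ : ∀ y, ∃ n, D₁^[n] y = 0) (D₂ : Derivation R A A) (x : A) :
    ∃ n, ∀ m ≥ n, ((LieAlgebra.ad R _ D₁ ^ m) D₂) x = 0 := by
  obtain ⟨n, hn⟩ := Module.End.exists_forall_ad_pow_apply_eq_zero (f := (D₁ : Module.End R A))
    (fun y => by simpa [Module.End.pow_apply] using hD₁ y) D₂ x
  exact ⟨n, fun m hm => by simpa [← coe_ad_pow] using hn m hm⟩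

theorem ad_pow_apply_of_apply_eq_zero {D₁ : Derivation R A A} {x : A} (hx : D₁ x = 0)
    (D₂ : Derivation R A A) (m : ℕ) :
    ((LieAlgebra.ad R _ D₁ ^ m) D₂) x = D₁^[m] (D₂ x) := by
  induction m with
  | zero => rfl
  | succ m ih =>
    rw [pow_succ', Module.End.mul_apply, LieAlgebra.ad_apply, commutator_apply, ih, hx,
      map_zero, sub_zero, Function.iterate_succ_apply']

end Derivation

end AdjointAction

theorem exists_apply_ne_zero_and_apply_apply_eq_zero {M F : Type*} [Zero M] [FunLike F M M]
    [ZeroHomClass F M M] (f : F) {x : M} (hx : f x ≠ 0) {n : ℕ} (hn : f^[n] x = 0) :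
    ∃ c, f c ≠ 0 ∧ f (f c) = 0 := by
  induction n generalizing x with
  | zero =>
    rw [Function.iterate_zero_apply] at hn
    exact absurd (by rw [hn, map_zero]) hx
  | succ n ih =>
    by_cases hfx : f (f x) = 0
    · exact ⟨x, hx, hfx⟩
    · exact ih hfx (by rwa [Function.iterate_succ_apply] at hn)

namespace MvPolynomial

variable {σ R : Type*}

theorem exists_iterate_eq_zero_of_forall_apply_X_mem_supported [CommSemiring R] [Preorder σ]
    [WellFoundedLT σ] {D : Derivation R (MvPolynomial σ R) (MvPolynomial σ R)}
    (hD : ∀ i, D (X i) ∈ supported R {j | j < i}) (p : MvPolynomial σ R) :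
    ∃ n, D^[n] p = 0 := by
  have hX : ∀ i, X i ∈ D.nilSubalgebra := fun i => by
    induction i using WellFoundedLT.induction with
    | _ i ih =>
      obtain ⟨n, hn⟩ := Algebra.adjoin_le (by rintro _ ⟨j, hj, rfl⟩; exact ih j hj) (hD i)
      exact ⟨n + 1, by rwa [Function.iterate_succ_apply]⟩
  have hp : p ∈ Algebra.adjoin R (Set.range (X : σ → MvPolynomial σ R)) := by
    rw [adjoin_range_X]; exact Algebra.mem_top
  exact Algebra.adjoin_le (Set.range_subset_iff.2 hX) hp

theorem lie_smul_pderiv_smul_pderiv [CommRing R] (a b : MvPolynomial σ R) (r q : σ) :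
    ⁅a • pderiv (R := R) r, b • pderiv (R := R) q⁆ =
      (a * pderiv r b) • pderiv q - (b * pderiv q a) • pderiv r := by
  classical
  refine derivation_ext fun k => ?_
  simp only [Derivation.commutator_apply, Derivation.smul_apply, Derivation.sub_apply, pderiv_X,
    smul_eq_mul, Pi.single_apply]
  split_ifs <;> simp [mul_comm, mul_left_comm]

end MvPolynomial

namespace triangularInf

variable {K : Type*} [Field K]

theorem exists_forall_ge_apply_X_eq_zero {D : Derivation K (MvPolynomial ℕ K) (MvPolynomial ℕ K)}
    (hD : D ∈ triSetInf K) : ∃ N, ∀ k ≥ N, D (X k) = 0 := by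
  obtain ⟨N, hN⟩ := hD.2.bddAbove
  exact ⟨N + 1, fun k hk => by_contra fun h => by have := hN h; omega⟩

theorem smul_pderiv_mem {c : MvPolynomial ℕ K} {N : ℕ} (hc : c ∈ supported K {j | j < N}) :
    c • pderiv N ∈ triangularInf K := by
  have happly : ∀ i, (c • pderiv N) (X i) = if i = N then c else 0 := fun i => by
    classical
    simp [pderiv_X, Pi.single_apply, eq_comm]
  refine ⟨fun i => ?_, (Set.finite_singleton N).subset fun i hi => ?_⟩
  · rw [happly]
    split_ifs with hiN
    · exact hiN ▸ hc
    · exact zero_mem _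
  · by_contra hiN
    exact hi (by rw [happly, if_neg (by simpa using hiN)])

theorem X_smul_pderiv_mem {p q : ℕ} (hpq : p < q) :
    (X p : MvPolynomial ℕ K) • pderiv q ∈ triangularInf K :=
  smul_pderiv_mem (X_mem_supported.2 hpq)

theorem X_smul_pderiv_mem_derivedSeries (k : ℕ) {p q : ℕ} (hpq : p + 2 ^ k ≤ q) :
    (⟨X p • pderiv q, X_smul_pderiv_mem (by have := k.two_pow_pos; omega)⟩ : triangularInf K) ∈
      LieAlgebra.derivedSeries K (triangularInf K) k := by
  induction k generalizing p q with
  | zero => exact LieSubmodule.mem_top _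
  | succ k ih =>
    have := k.two_pow_pos
    have hsplit : (⟨X p • pderiv q, X_smul_pderiv_mem (by omega)⟩ : triangularInf K) =
        ⁅(⟨X p • pderiv (p + 2 ^ k), X_smul_pderiv_mem (by omega)⟩ : triangularInf K),
          ⟨X (p + 2 ^ k) • pderiv q, X_smul_pderiv_mem (by rw [pow_succ] at hpq; omega)⟩⁆ :=
      Subtype.ext <| by
        rw [LieSubalgebra.coe_bracket, lie_smul_pderiv_smul_pderiv, pderiv_X_self,
          pderiv_X_of_ne (by omega), mul_one, mul_zero, zero_smul, sub_zero]
    rw [hsplit, LieAlgebra.derivedSeries_def, LieAlgebra.derivedSeriesOfIdeal_succ]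
    exact LieSubmodule.lie_mem_lie (ih le_rfl) (ih (by rw [pow_succ] at hpq; omega))

theorem not_isSolvable : ¬ LieAlgebra.IsSolvable (triangularInf K) := by
  intro hsolv
  obtain ⟨k, hk⟩ := (LieAlgebra.isSolvable_iff K _).1 hsolv
  have hmem := X_smul_pderiv_mem_derivedSeries (K := K) k (p := 0) (q := 2 ^ k) (zero_add _).le
  rw [hk, LieSubmodule.mem_bot] at hmem
  have hX := congrArg (fun w : triangularInf K => w.1 (X (2 ^ k))) hmem
  simp at hX

theorem eq_zero_of_ad_pow_eq_zero [CharZero K] {u : triangularInf K} {m : ℕ}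
    (hm : LieAlgebra.ad K (triangularInf K) u ^ m = 0) : u = 0 := by
  by_contra hu
  obtain ⟨i, hi⟩ : ∃ i, u.1 (X i) ≠ 0 := by
    by_contra! h
    exact hu (Subtype.ext (derivation_ext fun i => h i))
  obtain ⟨t, ht⟩ := exists_iterate_eq_zero_of_forall_apply_X_mem_supported u.2.1 (X i)
  obtain ⟨c, hc, hcc⟩ := exists_apply_ne_zero_and_apply_apply_eq_zero u.1 hi ht
  obtain ⟨N₁, hN₁⟩ := exists_forall_ge_apply_X_eq_zero u.2
  obtain ⟨N₀, hN₀⟩ := c.vars.exists_nat_subset_range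
  set N := max N₀ N₁
  have hcN : c ^ m ∈ supported K {j | j < N} := pow_mem (supported_mono
    (fun j hj => (mem_range.1 (hN₀ hj)).trans_le (le_max_left _ _)) (mem_supported_vars c)) m
  have hvanish := congrArg (fun w : triangularInf K => w.1 (X N))
    (LinearMap.congr_fun hm ⟨c ^ m • pderiv N, smul_pderiv_mem hcN⟩)
  simp only [LieSubalgebra.coe_ad_pow, LinearMap.zero_apply, ZeroMemClass.coe_zero,
    Derivation.zero_apply] at hvanish
  rw [Derivation.ad_pow_apply_of_apply_eq_zero (hN₁ N (le_max_right _ _)), Derivation.smul_apply,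
    pderiv_X_self, smul_eq_mul, mul_one, Derivation.iterate_pow_self_eq_factorial_smul _ hcc]
    at hvanish
  exact smul_ne_zero (Nat.factorial_ne_zero m) (pow_ne_zero m hc) hvanish

theorem center_eq_bot [CharZero K] : LieAlgebra.center K (triangularInf K) = ⊥ := by
  refine (LieSubmodule.eq_bot_iff _).2 fun u hu => eq_zero_of_ad_pow_eq_zero (m := 1) ?_
  rw [← LieAlgebra.self_module_ker_eq_center, LieModule.mem_ker] at hu
  exact LinearMap.ext fun v => by rw [pow_one, LieAlgebra.ad_apply, hu, LinearMap.zero_apply]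

theorem exists_ad_pow_apply_eq_zero (u v : triangularInf K) :
    ∃ m, (LieAlgebra.ad K (triangularInf K) u ^ m) v = 0 := by
  obtain ⟨N₁, hN₁⟩ := exists_forall_ge_apply_X_eq_zero u.2
  obtain ⟨N₂, hN₂⟩ := exists_forall_ge_apply_X_eq_zero v.2
  choose n hn using Derivation.exists_forall_ad_pow_apply_eq_zero
    (exists_iterate_eq_zero_of_forall_apply_X_mem_supported u.2.1) v.1
  refine ⟨(range (max N₁ N₂)).sup fun k => n (X k), Subtype.ext (derivation_ext fun k => ?_)⟩
  rw [LieSubalgebra.coe_ad_pow]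
  rcases lt_or_ge k (max N₁ N₂) with hk | hk
  · exact hn _ _ (le_sup (f := fun k => n (X k)) (mem_range.2 hk))
  · rw [Derivation.ad_pow_apply_of_apply_eq_zero (hN₁ k (le_of_max_le_left hk)),
      hN₂ k (le_of_max_le_right hk), iterate_map_zero]
    rfl

end triangularInf

/-- **Statement 19.** (1) The Lie algebra `u_∞` is not solvable. (2) Its centre is zero.
(3) For `u ∈ u_∞`, the inner derivation `ad u` is a nilpotent endomorphism iff `u = 0`;
nevertheless every inner derivation of `u_∞` is locally nilpotent. -/
theorem triangularInf_properties
    (K : Type*) [Field K] [CharZero K] :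
    (¬ LieAlgebra.IsSolvable ↥(triangularInf K)) ∧
    (LieAlgebra.center K ↥(triangularInf K) = ⊥) ∧
    (∀ u : ↥(triangularInf K),
      (∃ m : ℕ, (LieAlgebra.ad K ↥(triangularInf K) u) ^ m = 0) ↔ u = 0) ∧
    (∀ u v : ↥(triangularInf K), ∃ m : ℕ,
      ((LieAlgebra.ad K ↥(triangularInf K) u) ^ m) v = 0) :=
  ⟨triangularInf.not_isSolvable, triangularInf.center_eq_bot,
    fun _ => ⟨fun ⟨_, hm⟩ => triangularInf.eq_zero_of_ad_pow_eq_zero hm,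
      by rintro rfl; exact ⟨1, by rw [pow_one, map_zero]⟩⟩,
    triangularInf.exists_ad_pow_apply_eq_zero⟩
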